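/- Let f and H be holomorphic on a domain, φ smooth real-valued, and G := φ − 2Re H (so φ = 2Re H + G). Then for every k ≥ 0, ∂^k(f e^{−H}) = Σ_{j=0}^k (−1)^j C(k,j) (∂̄*_φ)^{(j)} f · B_{k−j}^{G} · e^{−H}, where B_m^G(w) := B_m(∂G(w),...,∂^m G(w)) is the m-th complete Bell polynomial evaluated at the Wirtinger derivatives of G, and (∂̄*_φ)^{(j)} f := (−1)^j e^{φ} ∂^j(f e^{−φ}). -/

import Mathlib

open Complex Finset

noncomputable def partialBell (n k : ℕ) (x : ℕ → ℂ) : ℂ :=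
  ∑ m ∈ Finset.univ.filter
      (fun m : Fin n → Fin (n + 1) =>
        (∑ i, (m i : ℕ)) = k ∧ (∑ i, (i.1 + 1) * (m i : ℕ)) = n),
    (n.factorial : ℂ) / (∏ i, ((m i : ℕ).factorial : ℂ)) *
      ∏ i, (x (i.1 + 1) / ((i.1 + 1).factorial : ℂ)) ^ (m i : ℕ)

/-- The complete exponential Bell polynomial: `B_0 = 1`, `B_n = ∑_{k=1}^n B_{n,k}`. -/
noncomputable def completeBell (n : ℕ) (x : ℕ → ℂ) : ℂ :=
  if n = 0 then 1 else ∑ k ∈ Finset.Icc 1 n, partialBell n k x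

/-- The holomorphic Wirtinger derivative `∂g = (∂_x g − i ∂_y g)/2`. -/
noncomputable def wirtinger (g : ℂ → ℂ) (z : ℂ) : ℂ :=
  (fderiv ℝ g z 1 - Complex.I * fderiv ℝ g z Complex.I) / 2

/-- Iterated Wirtinger derivative `∂^j`. -/
noncomputable def wirtingerIter : ℕ → (ℂ → ℂ) → ℂ → ℂ
  | 0, g => g
  | n + 1, g => wirtinger (wirtingerIter n g)

/-- `(∂̄*_φ)^{(j)} f = (−1)^j e^{φ} ∂^j(f e^{−φ})`. -/
noncomputable def dbarStarIter (ψ : ℂ → ℝ) (j : ℕ) (f : ℂ → ℂ) (z : ℂ) : ℂ :=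
  (-1 : ℂ) ^ j * (Real.exp (ψ z) : ℂ) *
    wirtingerIter j (fun w => f w * (Real.exp (-ψ w) : ℂ)) z

lemma wirtinger_contDiff {g : ℂ → ℂ} (hg : ContDiff ℝ (⊤ : ℕ∞) g) :
    ContDiff ℝ (⊤ : ℕ∞) (wirtinger g) := by
  have h1 : ContDiff ℝ (⊤ : ℕ∞) (fderiv ℝ g) := hg.fderiv_right (by exact_mod_cast le_refl _)
  have h2 : ContDiff ℝ (⊤ : ℕ∞) (fun z => fderiv ℝ g z 1) := h1.clm_apply contDiff_const
  have h3 : ContDiff ℝ (⊤ : ℕ∞) (fun z => fderiv ℝ g z Complex.I) := h1.clm_apply contDiff_const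
  exact ((h2.sub (contDiff_const.mul h3)).div_const 2)

lemma wirtingerIter_contDiff {g : ℂ → ℂ} (hg : ContDiff ℝ (⊤ : ℕ∞) g) (n : ℕ) :
    ContDiff ℝ (⊤ : ℕ∞) (wirtingerIter n g) := by
  induction n with
  | zero => exact hg
  | succ n ih => exact wirtinger_contDiff ih

lemma wirtinger_mul {u v : ℂ → ℂ} {z : ℂ} (hu : DifferentiableAt ℝ u z)
    (hv : DifferentiableAt ℝ v z) :
    wirtinger (fun w => u w * v w) z = wirtinger u z * v z + u z * wirtinger v z := by
  unfold wirtinger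
  rw [fderiv_fun_mul hu hv]
  simp only [ContinuousLinearMap.add_apply, ContinuousLinearMap.smul_apply, smul_eq_mul]
  ring

lemma fderiv_real_of_holo {E : ℂ → ℂ} {z : ℂ} (hE : DifferentiableAt ℂ E z) (v : ℂ) :
    fderiv ℝ E z v = deriv E z * v := by
  rw [(hE.hasFDerivAt.restrictScalars ℝ).fderiv]
  show fderiv ℂ E z v = deriv E z * v
  have : v = v • (1 : ℂ) := by simp
  rw [this, (fderiv ℂ E z).map_smul]
  simp [fderiv_apply_one_eq_deriv, smul_eq_mul]
  ring

lemma wirtinger_of_holo {E : ℂ → ℂ} {z : ℂ} (hE : DifferentiableAt ℂ E z) :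
    wirtinger E z = deriv E z := by
  unfold wirtinger
  rw [fderiv_real_of_holo hE, fderiv_real_of_holo hE]
  linear_combination (-(deriv E z)/2) * Complex.I_mul_I

lemma fderiv_real_conj_holo {E : ℂ → ℂ} {z : ℂ} (hE : DifferentiableAt ℂ E z) (v : ℂ) :
    fderiv ℝ (fun w => (starRingEnd ℂ) (E w)) z v = (starRingEnd ℂ) (deriv E z * v) := by
  have h1 : HasFDerivAt (fun w => (starRingEnd ℂ) (E w))
      ((Complex.conjCLE.toContinuousLinearMap).comp
        ((fderiv ℂ E z).restrictScalars ℝ)) z := by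
    exact (Complex.conjCLE.toContinuousLinearMap.hasFDerivAt).comp z
      (hE.hasFDerivAt.restrictScalars ℝ)
  rw [h1.fderiv]
  have h2 : ((fderiv ℂ E z).restrictScalars ℝ) v = deriv E z * v := by
    show fderiv ℂ E z v = deriv E z * v
    have : v = v • (1 : ℂ) := by simp
    rw [this, (fderiv ℂ E z).map_smul]
    simp [fderiv_apply_one_eq_deriv, smul_eq_mul]; ring
  simp only [ContinuousLinearMap.coe_comp', Function.comp_apply,
    ContinuousLinearEquiv.coe_coe, h2]
  rfl

lemma wirtinger_conj_holo {E : ℂ → ℂ} {z : ℂ} (hE : DifferentiableAt ℂ E z) :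
    wirtinger (fun w => (starRingEnd ℂ) (E w)) z = 0 := by
  unfold wirtinger
  rw [fderiv_real_conj_holo hE, fderiv_real_conj_holo hE]
  simp only [map_mul, map_one, Complex.conj_I]
  linear_combination ((starRingEnd ℂ) (deriv E z)/2) * Complex.I_mul_I

lemma wirtinger_sum {ι : Type*} (s : Finset ι) (F : ι → ℂ → ℂ) {z : ℂ}
    (hF : ∀ i ∈ s, DifferentiableAt ℝ (F i) z) :
    wirtinger (fun w => ∑ i ∈ s, F i w) z = ∑ i ∈ s, wirtinger (F i) z := by
  unfold wirtinger
  rw [fderiv_fun_sum hF]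
  simp only [ContinuousLinearMap.sum_apply]
  rw [Finset.mul_sum, ← Finset.sum_sub_distrib, Finset.sum_div]

lemma wirtinger_const_mul (c : ℂ) {u : ℂ → ℂ} {z : ℂ} (hu : DifferentiableAt ℝ u z) :
    wirtinger (fun w => c * u w) z = c * wirtinger u z := by
  unfold wirtinger
  rw [fderiv_const_mul hu c]
  simp only [ContinuousLinearMap.smul_apply, smul_eq_mul]
  ring

lemma contDiff_top_differentiableAt {g : ℂ → ℂ} (hg : ContDiff ℝ (⊤ : ℕ∞) g) (z : ℂ) :
    DifferentiableAt ℝ g z :=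
  (hg.differentiable (by simp)) z

lemma wirtingerIter_mul {u v : ℂ → ℂ} (hu : ContDiff ℝ (⊤ : ℕ∞) u)
    (hv : ContDiff ℝ (⊤ : ℕ∞) v) (k : ℕ) :
    wirtingerIter k (fun w => u w * v w) = fun z =>
      ∑ j ∈ Finset.range (k + 1),
        (k.choose j : ℂ) * wirtingerIter j u z * wirtingerIter (k - j) v z := by
  induction k with
  | zero => funext z; simp [wirtingerIter]
  | succ k ih =>
    show wirtinger (wirtingerIter k fun w => u w * v w) = _
    rw [ih]
    funext z
    have hdA : ∀ j z, DifferentiableAt ℝ (wirtingerIter j u) z := fun j z =>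
      contDiff_top_differentiableAt (wirtingerIter_contDiff hu j) z
    have hdB : ∀ j z, DifferentiableAt ℝ (wirtingerIter j v) z := fun j z =>
      contDiff_top_differentiableAt (wirtingerIter_contDiff hv j) z
    rw [wirtinger_sum _ _ (fun j _ => by
      have : (fun z => (k.choose j : ℂ) * wirtingerIter j u z * wirtingerIter (k - j) v z)
          = fun z => (k.choose j : ℂ) * (wirtingerIter j u z * wirtingerIter (k - j) v z) := by
        funext z; ring
      rw [this]
      exact (DifferentiableAt.mul (hdA j z) (hdB (k - j) z)).const_mul _)]
    have key : ∀ j, wirtinger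
        (fun z => (k.choose j : ℂ) * wirtingerIter j u z * wirtingerIter (k - j) v z) z =
        (k.choose j : ℂ) * (wirtingerIter (j + 1) u z * wirtingerIter (k - j) v z
          + wirtingerIter j u z * wirtingerIter (k - j + 1) v z) := by
      intro j
      have h1 : (fun z => (k.choose j : ℂ) * wirtingerIter j u z * wirtingerIter (k - j) v z)
          = fun z => (k.choose j : ℂ) * (wirtingerIter j u z * wirtingerIter (k - j) v z) := by
        funext z; ring
      rw [h1, wirtinger_const_mul _ (u := fun z => wirtingerIter j u z * wirtingerIter (k - j) v z) ((hdA j z).mul (hdB (k - j) z)),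
        wirtinger_mul (hdA j z) (hdB (k - j) z)]
      rfl
    simp only [key]
    -- now the Pascal shuffle
    have expand : ∀ j, (k.choose j : ℂ) * (wirtingerIter (j + 1) u z * wirtingerIter (k - j) v z
          + wirtingerIter j u z * wirtingerIter (k - j + 1) v z)
        = (k.choose j : ℂ) * wirtingerIter (j + 1) u z * wirtingerIter (k - j) v z
          + (k.choose j : ℂ) * wirtingerIter j u z * wirtingerIter (k - j + 1) v z := by
      intro j; ring
    simp only [expand]
    rw [Finset.sum_add_distrib]
    -- S1 + S2 = RHS
    rw [Finset.sum_range_succ' (fun j => ((k+1).choose j : ℂ) * wirtingerIter j u z *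
      wirtingerIter (k + 1 - j) v z) (k + 1)]
    have hc : ∀ j, (((k+1).choose (j+1) : ℕ) : ℂ) = (k.choose j : ℂ) + (k.choose (j+1) : ℂ) := by
      intro j; rw [Nat.choose_succ_succ]; push_cast; ring
    have hsub : ∀ j, k + 1 - (j + 1) = k - j := fun j => Nat.succ_sub_succ k j
    simp only [hc, hsub, Nat.choose_zero_right, Nat.cast_one, one_mul, Nat.sub_zero]
    have split : ∀ j, ((k.choose j : ℂ) + (k.choose (j+1) : ℂ)) * wirtingerIter (j+1) u z *
        wirtingerIter (k - j) v z
        = (k.choose j : ℂ) * wirtingerIter (j+1) u z * wirtingerIter (k - j) v z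
          + (k.choose (j+1) : ℂ) * wirtingerIter (j+1) u z * wirtingerIter (k - j) v z := by
      intro j; ring
    simp only [split]
    rw [Finset.sum_add_distrib]
    have hS2 : ∑ j ∈ Finset.range (k + 1),
        (k.choose j : ℂ) * wirtingerIter j u z * wirtingerIter (k - j + 1) v z
        = ∑ j ∈ Finset.range (k + 1),
          (k.choose (j+1) : ℂ) * wirtingerIter (j+1) u z * wirtingerIter (k - j) v z
          + wirtingerIter 0 u z * wirtingerIter (k + 1) v z := by
      rw [Finset.sum_range_succ' (fun j =>
        (k.choose j : ℂ) * wirtingerIter j u z * wirtingerIter (k - j + 1) v z) k]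
      rw [Finset.sum_range_succ (fun j =>
        (k.choose (j+1) : ℂ) * wirtingerIter (j+1) u z * wirtingerIter (k - j) v z) k]
      simp only [Nat.choose_succ_self, Nat.cast_zero, zero_mul, add_zero,
        Nat.choose_zero_right, Nat.cast_one, one_mul, Nat.sub_zero]
      congr 1
      apply Finset.sum_congr rfl
      intro j hj
      have hjk : j + 1 ≤ k := Finset.mem_range.mp hj
      have : k - (j + 1) + 1 = k - j := by omega
      rw [this]
    rw [hS2]
    ring

lemma wirtingerIter_succ' (g : ℂ → ℂ) (n : ℕ) :
    wirtingerIter (n + 1) g = wirtingerIter n (wirtinger g) := by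
  induction n with
  | zero => rfl
  | succ n ih => show wirtinger (wirtingerIter (n+1) g) = _; rw [ih]; rfl

lemma wirtingerIter_mul_antiholo {P Q : ℂ → ℂ} (hP : ContDiff ℝ (⊤ : ℕ∞) P)
    (hQ : ∀ z, DifferentiableAt ℝ Q z) (hQ0 : ∀ z, wirtinger Q z = 0) (k : ℕ) :
    wirtingerIter k (fun w => P w * Q w) = fun z => wirtingerIter k P z * Q z := by
  induction k with
  | zero => rfl
  | succ k ih =>
    show wirtinger (wirtingerIter k fun w => P w * Q w) = _
    rw [ih]
    funext z
    rw [wirtinger_mul (contDiff_top_differentiableAt (wirtingerIter_contDiff hP k) z) (hQ z),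
      hQ0 z]
    rw [mul_zero, add_zero]
    rfl

lemma fderiv_ofReal_comp {G : ℂ → ℝ} {z : ℂ} (hG : DifferentiableAt ℝ G z) (v : ℂ) :
    fderiv ℝ (fun w => ((G w : ℝ) : ℂ)) z v = ((fderiv ℝ G z v : ℝ) : ℂ) := by
  have h := (Complex.ofRealCLM.hasFDerivAt.comp z hG.hasFDerivAt)
  rw [show (fun w => ((G w : ℝ) : ℂ)) = ⇑Complex.ofRealCLM ∘ G from rfl, h.fderiv]
  rfl

lemma fderiv_ofReal_exp_comp {G : ℂ → ℝ} {z : ℂ} (hG : DifferentiableAt ℝ G z) (v : ℂ) :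
    fderiv ℝ (fun w => ((Real.exp (G w) : ℝ) : ℂ)) z v
      = (Real.exp (G z) : ℂ) * ((fderiv ℝ G z v : ℝ) : ℂ) := by
  have h1 : HasFDerivAt (fun w => Real.exp (G w)) (Real.exp (G z) • fderiv ℝ G z) z :=
    (Real.hasDerivAt_exp (G z)).comp_hasFDerivAt z hG.hasFDerivAt
  have h2 := (Complex.ofRealCLM.hasFDerivAt).comp z h1
  rw [show (fun w => ((Real.exp (G w) : ℝ) : ℂ)) = ⇑Complex.ofRealCLM ∘ (fun w => Real.exp (G w)) from rfl,
    h2.fderiv]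
  simp [ContinuousLinearMap.comp_apply]

lemma wirtinger_exp_real {G : ℂ → ℝ} {z : ℂ} (hG : DifferentiableAt ℝ G z) :
    wirtinger (fun w => ((Real.exp (G w) : ℝ) : ℂ)) z
      = (Real.exp (G z) : ℂ) * wirtinger (fun w => ((G w : ℝ) : ℂ)) z := by
  unfold wirtinger
  rw [fderiv_ofReal_exp_comp hG, fderiv_ofReal_exp_comp hG,
    fderiv_ofReal_comp hG, fderiv_ofReal_comp hG]
  ring

noncomputable def bellRec : ℕ → (ℕ → ℂ) → ℂ
  | 0, _ => 1
  | (n+1), x => ∑ j ∈ (Finset.range (n+1)).attach,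
      (n.choose j.1 : ℂ) * bellRec j.1 x * x (n - j.1 + 1)
  decreasing_by exact Finset.mem_range.mp j.2

lemma bellRec_succ (n : ℕ) (x : ℕ → ℂ) :
    bellRec (n+1) x = ∑ j ∈ Finset.range (n+1),
      (n.choose j : ℂ) * bellRec j x * x (n - j + 1) := by
  rw [bellRec, ← Finset.sum_attach (Finset.range (n+1))
    (fun j => (n.choose j : ℂ) * bellRec j x * x (n - j + 1))]

lemma exp_real_contDiff {G : ℂ → ℝ} (hG : ContDiff ℝ (⊤ : ℕ∞) G) :
    ContDiff ℝ (⊤ : ℕ∞) (fun w => ((Real.exp (G w) : ℝ) : ℂ)) :=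
  Complex.ofRealCLM.contDiff.comp (Real.contDiff_exp.comp hG)

lemma ofReal_comp_contDiff {G : ℂ → ℝ} (hG : ContDiff ℝ (⊤ : ℕ∞) G) :
    ContDiff ℝ (⊤ : ℕ∞) (fun w => ((G w : ℝ) : ℂ)) :=
  Complex.ofRealCLM.contDiff.comp hG

lemma wirtingerIter_exp_real {G : ℂ → ℝ} (hG : ContDiff ℝ (⊤ : ℕ∞) G) (m : ℕ) :
    wirtingerIter m (fun w => ((Real.exp (G w) : ℝ) : ℂ))
      = fun z => (Real.exp (G z) : ℂ) *
          bellRec m (fun j => wirtingerIter j (fun w => ((G w : ℝ) : ℂ)) z) := by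
  induction m using Nat.strong_induction_on with
  | _ m ih =>
    match m with
    | 0 => funext z; simp [wirtingerIter, bellRec]
    | (n+1) =>
      rw [wirtingerIter_succ']
      have hstep : wirtinger (fun w => ((Real.exp (G w) : ℝ) : ℂ))
          = fun w => ((Real.exp (G w) : ℝ) : ℂ) *
              wirtinger (fun w => ((G w : ℝ) : ℂ)) w := by
        funext w
        exact wirtinger_exp_real ((hG.differentiable (by simp)) w)
      rw [hstep]
      rw [wirtingerIter_mul (exp_real_contDiff hG)
        (wirtinger_contDiff (ofReal_comp_contDiff hG)) n]
      funext z
      rw [bellRec_succ, Finset.mul_sum]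
      apply Finset.sum_congr rfl
      intro j hj
      have hjn : j < n + 1 := Finset.mem_range.mp hj
      rw [ih j hjn]
      have : wirtingerIter (n - j) (wirtinger (fun w => ((G w : ℝ) : ℂ)))
          = wirtingerIter (n - j + 1) (fun w => ((G w : ℝ) : ℂ)) := by
        rw [wirtingerIter_succ']
      rw [this]
      ring

/-- `{1, ..., N}` as image of `range N`. -/
def sh (N : ℕ) : Finset ℕ := (Finset.range N).image (· + 1)

lemma mem_sh {N j : ℕ} : j ∈ sh N ↔ 1 ≤ j ∧ j ≤ N := by
  simp only [sh, Finset.mem_image, Finset.mem_range]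
  constructor
  · rintro ⟨i, hi, rfl⟩; omega
  · rintro ⟨h1, h2⟩; exact ⟨j - 1, by omega, by omega⟩

noncomputable def bw (n : ℕ) (x : ℕ → ℂ) (μ : ℕ →₀ ℕ) : ℂ :=
  (n.factorial : ℂ) / (μ.prod fun _ c => (c.factorial : ℂ)) *
    μ.prod fun i c => (x i / (i.factorial : ℂ)) ^ c

noncomputable def bE (n : ℕ) : Finset (ℕ →₀ ℕ) :=
  ((sh n).finsupp (fun _ => Finset.range (n + 1))).filter
    (fun μ => (μ.sum fun i c => i * c) = n)

lemma single_mul_le_wsum (μ : ℕ →₀ ℕ) (a : ℕ) :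
    a * μ a ≤ μ.sum fun i c => i * c := by
  by_cases h : a ∈ μ.support
  · rw [Finsupp.sum]
    exact Finset.single_le_sum (f := fun i => i * μ i) (fun i _ => Nat.zero_le _) h
  · simp [Finsupp.notMem_support_iff.mp h]

lemma mem_bE {n : ℕ} {μ : ℕ →₀ ℕ} :
    μ ∈ bE n ↔ μ 0 = 0 ∧ (μ.sum fun i c => i * c) = n := by
  constructor
  · intro h
    rw [bE, Finset.mem_filter, Finset.mem_finsupp_iff] at h
    obtain ⟨⟨hsupp, -⟩, hsum⟩ := h
    refine ⟨?_, hsum⟩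
    by_contra h0
    have h1 : (0 : ℕ) ∈ μ.support := Finsupp.mem_support_iff.mpr h0
    have := mem_sh.mp (hsupp h1)
    omega
  · rintro ⟨h0, hsum⟩
    rw [bE, Finset.mem_filter, Finset.mem_finsupp_iff]
    have hb : ∀ j, μ j ≤ n := by
      intro j
      rcases Nat.eq_zero_or_pos j with rfl | hj
      · simp [h0]
      · have h1 := single_mul_le_wsum μ j
        rw [hsum] at h1
        calc μ j ≤ j * μ j := Nat.le_mul_of_pos_left _ hj
        _ ≤ n := h1
    refine ⟨⟨?_, fun i _ => Finset.mem_range.mpr (Nat.lt_succ_of_le (hb i))⟩, hsum⟩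
    intro j hj
    have hjne := Finsupp.mem_support_iff.mp hj
    rw [mem_sh]
    have h1 := single_mul_le_wsum μ j
    rw [hsum] at h1
    constructor
    · by_contra h; simp only [not_le] at h
      interval_cases j
      exact hjne h0
    · nlinarith [Nat.one_le_iff_ne_zero.mpr hjne]

lemma bE_support {n : ℕ} {μ : ℕ →₀ ℕ} (h : μ ∈ bE n) : μ.support ⊆ sh n := by
  rw [bE, Finset.mem_filter, Finset.mem_finsupp_iff] at h
  exact h.1.1

lemma sum_sh {M : Type*} [AddCommMonoid M] {n : ℕ} {μ : ℕ →₀ ℕ}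
    (hsupp : μ.support ⊆ sh n) (g : ℕ → ℕ → M) (hg : ∀ j, g j 0 = 0) :
    μ.sum g = ∑ i ∈ Finset.range n, g (i + 1) (μ (i + 1)) := by
  rw [Finsupp.sum_of_support_subset μ hsupp g (fun i _ => hg i), sh,
    Finset.sum_image (fun a _ b _ h => by omega)]

lemma prod_sh {M : Type*} [CommMonoid M] {n : ℕ} {μ : ℕ →₀ ℕ}
    (hsupp : μ.support ⊆ sh n) (g : ℕ → ℕ → M) (hg : ∀ j, g j 0 = 1) :
    μ.prod g = ∏ i ∈ Finset.range n, g (i + 1) (μ (i + 1)) := by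
  rw [Finsupp.prod_of_support_subset μ hsupp g (fun i _ => hg i), sh,
    Finset.prod_image (fun a _ b _ h => by omega)]

lemma bE_zero : bE 0 = {0} := by
  ext μ
  rw [mem_bE, Finset.mem_singleton]
  constructor
  · rintro ⟨h0, hsum⟩
    ext j
    rcases Nat.eq_zero_or_pos j with rfl | hj
    · simp [h0]
    · by_contra hne
      have h1 := single_mul_le_wsum μ j
      rw [hsum] at h1
      simp only [Finsupp.coe_zero, Pi.zero_apply] at hne
      nlinarith [Nat.one_le_iff_ne_zero.mpr hne]
  · rintro rfl; simp

noncomputable def toμ (n : ℕ) (m : Fin n → Fin (n + 1)) : ℕ →₀ ℕ :=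
  ∑ i : Fin n, Finsupp.single (i.1 + 1) (m i : ℕ)

lemma toμ_apply {n : ℕ} (m : Fin n → Fin (n + 1)) (i : Fin n) :
    toμ n m (i.1 + 1) = (m i : ℕ) := by
  rw [toμ, Finsupp.finset_sum_apply]
  rw [Finset.sum_eq_single i]
  · exact Finsupp.single_eq_same
  · intro i' _ hne
    exact Finsupp.single_eq_of_ne' (by
      intro h
      exact hne (Fin.ext (Nat.succ_injective h)))
  · intro h; exact absurd (Finset.mem_univ i) h

lemma toμ_support {n : ℕ} (m : Fin n → Fin (n + 1)) : (toμ n m).support ⊆ sh n := by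
  intro j hj
  have h := Finsupp.support_finset_sum (Finsupp.mem_support_iff.mpr (Finsupp.mem_support_iff.mp hj))
  rw [Finset.mem_biUnion] at h
  obtain ⟨i, -, hi⟩ := h
  have := Finsupp.support_single_subset hi
  rw [Finset.mem_singleton] at this
  subst this
  exact mem_sh.mpr ⟨by omega, by have := i.2; omega⟩

lemma toμ_apply_not {n : ℕ} (m : Fin n → Fin (n + 1)) {j : ℕ} (hj : j ∉ sh n) :
    toμ n m j = 0 :=
  Finsupp.notMem_support_iff.mp (fun h => hj (toμ_support m h))

lemma toμ_prod {M : Type*} [CommMonoid M] {n : ℕ} (m : Fin n → Fin (n + 1))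
    (g : ℕ → ℕ → M) (hg : ∀ j, g j 0 = 1) :
    (toμ n m).prod g = ∏ i : Fin n, g (i.1 + 1) (m i : ℕ) := by
  rw [prod_sh (toμ_support m) g hg,
    ← Fin.prod_univ_eq_prod_range (fun i => g (i + 1) (toμ n m (i + 1))) n]
  exact Finset.prod_congr rfl (fun i _ => by rw [toμ_apply])

lemma toμ_sum {M : Type*} [AddCommMonoid M] {n : ℕ} (m : Fin n → Fin (n + 1))
    (g : ℕ → ℕ → M) (hg : ∀ j, g j 0 = 0) :
    (toμ n m).sum g = ∑ i : Fin n, g (i.1 + 1) (m i : ℕ) := by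
  rw [sum_sh (toμ_support m) g hg,
    ← Fin.sum_univ_eq_sum_range (fun i => g (i + 1) (toμ n m (i + 1))) n]
  exact Finset.sum_congr rfl (fun i _ => by rw [toμ_apply])

lemma bE_le {n : ℕ} {μ : ℕ →₀ ℕ} (h : μ ∈ bE n) (j : ℕ) : μ j ≤ n := by
  obtain ⟨h0, hsum⟩ := mem_bE.mp h
  rcases Nat.eq_zero_or_pos j with rfl | hj
  · simp [h0]
  · have h1 := single_mul_le_wsum μ j
    rw [hsum] at h1
    calc μ j ≤ j * μ j := Nat.le_mul_of_pos_left _ hj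
    _ ≤ n := h1

lemma μ_sum_fin {M : Type*} [AddCommMonoid M] {n : ℕ} {μ : ℕ →₀ ℕ}
    (hsupp : μ.support ⊆ sh n) (g : ℕ → ℕ → M) (hg : ∀ j, g j 0 = 0) :
    μ.sum g = ∑ i : Fin n, g (i.1 + 1) (μ (i.1 + 1)) := by
  rw [sum_sh hsupp g hg, ← Fin.sum_univ_eq_sum_range (fun i => g (i + 1) (μ (i + 1))) n]

lemma partialBell_eq (n k : ℕ) (x : ℕ → ℂ) :
    partialBell n k x
      = ∑ μ ∈ (bE n).filter (fun μ => (μ.sum fun _ c => c) = k), bw n x μ := by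
  rw [partialBell]
  refine Finset.sum_nbij' (fun m => toμ n m)
    (fun μ => fun i : Fin n => (⟨min (μ (i.1 + 1)) n, by omega⟩ : Fin (n + 1)))
    ?_ ?_ ?_ ?_ ?_
  · -- maps to
    intro m hm
    rw [Finset.mem_filter] at hm ⊢
    obtain ⟨-, hk, hn⟩ := hm
    refine ⟨mem_bE.mpr ⟨?_, ?_⟩, ?_⟩
    · exact toμ_apply_not m (by simp [mem_sh])
    · rw [toμ_sum m (fun j c => j * c) (fun j => by simp)]; exact hn
    · rw [toμ_sum m (fun _ c => c) (fun j => rfl)]; exact hk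
  · -- inverse maps to
    intro μ hμ
    rw [Finset.mem_filter] at hμ
    obtain ⟨hμE, hk⟩ := hμ
    have hle : ∀ i : Fin n, min (μ (i.1 + 1)) n = μ (i.1 + 1) :=
      fun i => min_eq_left (bE_le hμE _)
    rw [Finset.mem_filter]
    refine ⟨Finset.mem_univ _, ?_, ?_⟩
    · simp only [hle]
      rw [← μ_sum_fin (bE_support hμE) (fun _ c => c) (fun _ => rfl)]
      exact hk
    · simp only [hle]
      rw [← μ_sum_fin (bE_support hμE) (fun j c => j * c) (fun _ => by simp)]
      exact (mem_bE.mp hμE).2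
  · -- left inverse
    intro m hm
    funext i
    apply Fin.ext
    show min (toμ n m (i.1 + 1)) n = (m i : ℕ)
    rw [toμ_apply]
    exact min_eq_left (by have := (m i).2; omega)
  · -- right inverse
    intro μ hμ
    rw [Finset.mem_filter] at hμ
    obtain ⟨hμE, -⟩ := hμ
    ext j
    by_cases hj : j ∈ sh n
    · obtain ⟨h1, h2⟩ := mem_sh.mp hj
      have hji : j = (⟨j - 1, by omega⟩ : Fin n).1 + 1 := by simp; omega
      rw [hji, toμ_apply]
      show min (μ _) n = _
      rw [min_eq_left (bE_le hμE _)]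
    · rw [toμ_apply_not _ hj,
        Finsupp.notMem_support_iff.mp (fun h => hj (bE_support hμE h))]
  · -- term equality
    intro m hm
    rw [bw, toμ_prod m (fun _ c => ((Nat.factorial c : ℕ) : ℂ)) (fun j => by simp),
      toμ_prod m (fun i c => (x i / ((Nat.factorial i : ℕ) : ℂ)) ^ c) (fun j => by simp)]

lemma completeBell_eq (n : ℕ) (x : ℕ → ℂ) :
    completeBell n x = ∑ μ ∈ bE n, bw n x μ := by
  cases n with
  | zero =>
    rw [completeBell, if_pos rfl, bE_zero, Finset.sum_singleton, bw]
    simp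
  | succ n =>
    rw [completeBell, if_neg (Nat.succ_ne_zero n)]
    have hmaps : ∀ μ ∈ bE (n + 1), (μ.sum fun _ c => c) ∈ Finset.Icc 1 (n + 1) := by
      intro μ hμ
      obtain ⟨h0, hsum⟩ := mem_bE.mp hμ
      have hle : (μ.sum fun _ c => c) ≤ μ.sum fun i c => i * c := by
        apply Finset.sum_le_sum
        intro j hj
        have h1 : j ≠ 0 := fun h => (Finsupp.mem_support_iff.mp hj) (h ▸ h0)
        exact Nat.le_mul_of_pos_left _ (Nat.pos_of_ne_zero h1)
      have hge : 1 ≤ μ.sum fun _ c => c := by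
        by_contra h
        have hz : (μ.sum fun _ c => c) = 0 := by omega
        have : μ = 0 := by
          ext j
          by_contra hjne
          have hjne' : μ j ≠ 0 := by simpa using hjne
          have hmem : j ∈ μ.support := Finsupp.mem_support_iff.mpr hjne'
          have hle2 : μ j ≤ μ.sum fun _ c => c := by
            rw [Finsupp.sum]
            exact Finset.single_le_sum (f := fun i => μ i) (fun i _ => Nat.zero_le _) hmem
          omega
        rw [this] at hsum
        simp at hsum
      rw [Finset.mem_Icc]
      exact ⟨hge, le_trans hle (le_of_eq hsum)⟩
    rw [← Finset.sum_fiberwise_of_maps_to hmaps (bw (n + 1) x)]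
    apply Finset.sum_congr rfl
    intro k hk
    rw [partialBell_eq]

lemma sub_single_support {a : ℕ} {μ : ℕ →₀ ℕ} :
    (μ - Finsupp.single a 1).support ⊆ μ.support := by
  intro j hj
  rw [Finsupp.mem_support_iff] at hj ⊢
  rw [Finsupp.tsub_apply] at hj
  omega

lemma sub_single_add {a : ℕ} {μ : ℕ →₀ ℕ} (h : μ a ≠ 0) :
    (μ - Finsupp.single a 1) + Finsupp.single a 1 = μ := by
  ext j
  rw [Finsupp.add_apply, Finsupp.tsub_apply]
  by_cases hja : j = a
  · subst hja; rw [Finsupp.single_eq_same]; omega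
  · rw [Finsupp.single_eq_of_ne' (Ne.symm hja)]; omega

lemma add_single_sub {a : ℕ} {μ : ℕ →₀ ℕ} :
    (μ + Finsupp.single a 1) - Finsupp.single a 1 = μ := by
  ext j
  rw [Finsupp.tsub_apply, Finsupp.add_apply]
  omega

lemma wsum_add_single {a : ℕ} (μ : ℕ →₀ ℕ) :
    ((μ + Finsupp.single a 1).sum fun i c => i * c) = (μ.sum fun i c => i * c) + a := by
  rw [Finsupp.sum_add_index' (fun j => by simp) (fun j b1 b2 => by ring),
    Finsupp.sum_single_index (by simp)]
  simp

lemma scalar_helper (I1 C1 N Fn Cf A X D B Ch Fni : ℂ) (c : ℕ)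
    (hN : N ≠ 0) (hC1 : C1 ≠ 0) (hCf : Cf ≠ 0) (hA : A ≠ 0) (hD : D ≠ 0)
    (hkey : I1 * Fn = Ch * Fni * D) :
    I1 * C1 / N * (N * Fn / (C1 * Cf * A) * ((X / D) ^ c * (X / D) * B))
      = Ch * X * (Fni / (Cf * A) * ((X / D) ^ c * B)) := by
  have eC1 : C1 * C1⁻¹ = 1 := mul_inv_cancel₀ hC1
  have eN : N * N⁻¹ = 1 := mul_inv_cancel₀ hN
  have eD : D * D⁻¹ = 1 := mul_inv_cancel₀ hD
  calc I1 * C1 / N * (N * Fn / (C1 * Cf * A) * ((X / D) ^ c * (X / D) * B))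
      = (C1 * C1⁻¹) * (N * N⁻¹) * ((I1 * Fn) * D⁻¹ * (Cf⁻¹ * A⁻¹) * ((X / D) ^ c * X * B)) := by
        rw [div_eq_mul_inv (I1 * C1) N, div_eq_mul_inv (N * Fn) (C1 * Cf * A),
          div_eq_mul_inv X D, mul_inv_rev, mul_inv_rev]
        ring
    _ = (I1 * Fn) * D⁻¹ * (Cf⁻¹ * A⁻¹) * ((X / D) ^ c * X * B) := by
        rw [eC1, eN]; ring
    _ = (Ch * Fni) * (D * D⁻¹) * (Cf⁻¹ * A⁻¹) * ((X / D) ^ c * X * B) := by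
        rw [hkey]; ring
    _ = Ch * X * (Fni / (Cf * A) * ((X / D) ^ c * B)) := by
        rw [eD, div_eq_mul_inv Fni (Cf * A), mul_inv_rev]; ring

set_option maxHeartbeats 1600000 in
lemma bE_rec (n : ℕ) (x : ℕ → ℂ) :
    ∑ μ ∈ bE (n + 1), bw (n + 1) x μ
      = ∑ i ∈ Finset.range (n + 1), (n.choose i : ℂ) * x (i + 1) *
          ∑ μ ∈ bE (n - i), bw (n - i) x μ := by
  -- Step 1: weight-one trick
  have step1 : ∑ μ ∈ bE (n + 1), bw (n + 1) x μ
      = ∑ μ ∈ bE (n + 1), ∑ i ∈ Finset.range (n + 1),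
          (((i + 1) * μ (i + 1) : ℕ) : ℂ) / ((n + 1 : ℕ) : ℂ) * bw (n + 1) x μ := by
    apply Finset.sum_congr rfl
    intro μ hμ
    have hW : (∑ i ∈ Finset.range (n + 1), (i + 1) * μ (i + 1)) = n + 1 := by
      rw [← sum_sh (bE_support hμ) (fun j c => j * c) (fun j => by simp)]
      exact (mem_bE.mp hμ).2
    rw [← Finset.sum_mul, ← Finset.sum_div, ← Nat.cast_sum, hW]
    rw [div_self (by exact_mod_cast Nat.succ_ne_zero n), one_mul]
  rw [step1, Finset.sum_comm]
  apply Finset.sum_congr rfl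
  intro i hi
  have hin : i ≤ n := Nat.lt_succ_iff.mp (Finset.mem_range.mp hi)
  -- Step 2: restrict to μ with μ (i+1) ≠ 0
  rw [← Finset.sum_filter_of_ne (p := fun μ => μ (i + 1) ≠ 0) (by
    intro μ hμ hne h0
    apply hne
    rw [h0, Nat.mul_zero, Nat.cast_zero, zero_div, zero_mul])]
  -- Step 3: bijection with bE (n - i)
  rw [Finset.mul_sum]
  refine Finset.sum_nbij' (fun μ => μ - Finsupp.single (i + 1) 1)
    (fun μ => μ + Finsupp.single (i + 1) 1) ?_ ?_ ?_ ?_ ?_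
  · -- maps to
    intro μ hμ
    rw [Finset.mem_filter] at hμ
    obtain ⟨hμE, hne⟩ := hμ
    obtain ⟨h0, hsum⟩ := mem_bE.mp hμE
    have hback := sub_single_add (a := i + 1) (μ := μ) hne
    apply mem_bE.mpr
    constructor
    · rw [Finsupp.tsub_apply, h0, Finsupp.single_eq_of_ne' (by omega)]
      rfl
    · show ((μ - Finsupp.single (i + 1) 1).sum fun i c => i * c) = n - i
      have h2 := wsum_add_single (a := i + 1) (μ - Finsupp.single (i + 1) 1)
      rw [hback, hsum] at h2
      omega
  · -- inverse maps to
    intro μ' hμ'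
    obtain ⟨h0, hsum⟩ := mem_bE.mp hμ'
    rw [Finset.mem_filter]
    constructor
    · apply mem_bE.mpr
      constructor
      · rw [Finsupp.add_apply, h0, Finsupp.single_eq_of_ne' (by omega)]
        rfl
      · rw [wsum_add_single, hsum]; omega
    · rw [Finsupp.add_apply, Finsupp.single_eq_same]; omega
  · -- left inverse
    intro μ hμ
    rw [Finset.mem_filter] at hμ
    exact sub_single_add hμ.2
  · -- right inverse
    intro μ' _
    exact add_single_sub
  · -- term equality
    intro μ hμ
    rw [Finset.mem_filter] at hμ
    obtain ⟨hμE, hne⟩ := hμ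
    show (((i + 1) * μ (i + 1) : ℕ) : ℂ) / ((n + 1 : ℕ) : ℂ) * bw (n + 1) x μ
      = (n.choose i : ℂ) * x (i + 1) * bw (n - i) x (μ - Finsupp.single (i + 1) 1)
    have hback : (μ - Finsupp.single (i + 1) 1) + Finsupp.single (i + 1) 1 = μ :=
      sub_single_add hne
    obtain ⟨c, hc⟩ : ∃ c, μ (i + 1) = c + 1 := ⟨μ (i + 1) - 1, by omega⟩
    have hνc : ((μ - Finsupp.single (i + 1) 1 : ℕ →₀ ℕ)) (i + 1) = c := by
      rw [Finsupp.tsub_apply, hc, Finsupp.single_eq_same]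
      omega
    have hsupμ : μ.support ⊆ sh (n + 1) := bE_support hμE
    have hsupν : (μ - Finsupp.single (i + 1) 1).support ⊆ sh (n + 1) :=
      sub_single_support.trans hsupμ
    have haS : (i + 1) ∈ sh (n + 1) := mem_sh.mpr ⟨by omega, by omega⟩
    have hνμ : ∀ j ∈ (sh (n + 1)).erase (i + 1),
        ((μ - Finsupp.single (i + 1) 1 : ℕ →₀ ℕ)) j = μ j := by
      intro j hj
      have hja : j ≠ i + 1 := (Finset.mem_erase.mp hj).1
      have h1 := Finsupp.tsub_apply μ (Finsupp.single (i + 1) 1) j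
      have h2 : Finsupp.single (i + 1) 1 j = 0 := Finsupp.single_eq_of_ne' (Ne.symm hja)
      rw [h2] at h1
      omega
    set A := ∏ j ∈ (sh (n + 1)).erase (i + 1), ((Nat.factorial (μ j) : ℕ) : ℂ) with hA
    set B := ∏ j ∈ (sh (n + 1)).erase (i + 1),
      (x j / ((Nat.factorial j : ℕ) : ℂ)) ^ (μ j) with hB
    have hbwμ : bw (n + 1) x μ = ((Nat.factorial (n + 1) : ℕ) : ℂ)
        / (((Nat.factorial (c + 1) : ℕ) : ℂ) * A)
        * ((x (i + 1) / ((Nat.factorial (i + 1) : ℕ) : ℂ)) ^ (c + 1) * B) := by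
      rw [bw, Finsupp.prod_of_support_subset μ hsupμ
          (fun _ cc => ((Nat.factorial cc : ℕ) : ℂ)) (fun j _ => by simp),
        Finsupp.prod_of_support_subset μ hsupμ
          (fun j cc => (x j / ((Nat.factorial j : ℕ) : ℂ)) ^ cc) (fun j _ => by simp),
        ← Finset.mul_prod_erase _ (fun j => ((Nat.factorial (μ j) : ℕ) : ℂ)) haS,
        ← Finset.mul_prod_erase _ (fun j => (x j / ((Nat.factorial j : ℕ) : ℂ)) ^ (μ j)) haS,
        hc, hA, hB]
    have hprodf : ∏ j ∈ (sh (n + 1)).erase (i + 1),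
        ((Nat.factorial (((μ - Finsupp.single (i + 1) 1 : ℕ →₀ ℕ)) j) : ℕ) : ℂ) = A := by
      rw [hA]
      exact Finset.prod_congr rfl (fun j hj => by rw [hνμ j hj])
    have hprodx : ∏ j ∈ (sh (n + 1)).erase (i + 1),
        (x j / ((Nat.factorial j : ℕ) : ℂ))
          ^ (((μ - Finsupp.single (i + 1) 1 : ℕ →₀ ℕ)) j) = B := by
      rw [hB]
      exact Finset.prod_congr rfl (fun j hj => by rw [hνμ j hj])
    have hbwν : bw (n - i) x (μ - Finsupp.single (i + 1) 1)
        = ((Nat.factorial (n - i) : ℕ) : ℂ) / (((Nat.factorial c : ℕ) : ℂ) * A)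
        * ((x (i + 1) / ((Nat.factorial (i + 1) : ℕ) : ℂ)) ^ c * B) := by
      rw [bw, Finsupp.prod_of_support_subset _ hsupν
          (fun _ cc => ((Nat.factorial cc : ℕ) : ℂ)) (fun j _ => by simp),
        Finsupp.prod_of_support_subset _ hsupν
          (fun j cc => (x j / ((Nat.factorial j : ℕ) : ℂ)) ^ cc) (fun j _ => by simp),
        ← Finset.mul_prod_erase _
          (fun j => ((Nat.factorial (((μ - Finsupp.single (i + 1) 1 : ℕ →₀ ℕ)) j) : ℕ) : ℂ)) haS,
        ← Finset.mul_prod_erase _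
          (fun j => (x j / ((Nat.factorial j : ℕ) : ℂ))
            ^ (((μ - Finsupp.single (i + 1) 1 : ℕ →₀ ℕ)) j)) haS,
        hνc, hprodf, hprodx]
    rw [hbwμ, hbwν, hc]
    -- now a pure scalar identity
    have hAne : A ≠ 0 := by
      rw [hA]
      apply Finset.prod_ne_zero_iff.mpr
      intro j _
      exact_mod_cast Nat.factorial_ne_zero _
    have hfacne : ∀ m : ℕ, ((Nat.factorial m : ℕ) : ℂ) ≠ 0 :=
      fun m => by exact_mod_cast Nat.factorial_ne_zero m
    have hchoose : ((n.choose i : ℕ) : ℂ) * ((Nat.factorial i : ℕ) : ℂ)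
        * ((Nat.factorial (n - i) : ℕ) : ℂ) = ((Nat.factorial n : ℕ) : ℂ) := by
      exact_mod_cast congrArg (Nat.cast (R := ℂ))
        (Nat.choose_mul_factorial_mul_factorial hin)
    have hfs : ((Nat.factorial (n + 1) : ℕ) : ℂ)
        = ((n + 1 : ℕ) : ℂ) * ((Nat.factorial n : ℕ) : ℂ) := by
      rw [Nat.factorial_succ]; push_cast; ring
    have hfc : ((Nat.factorial (c + 1) : ℕ) : ℂ)
        = ((c + 1 : ℕ) : ℂ) * ((Nat.factorial c : ℕ) : ℂ) := by
      rw [Nat.factorial_succ]; push_cast; ring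
    have hfa : ((Nat.factorial (i + 1) : ℕ) : ℂ)
        = ((i + 1 : ℕ) : ℂ) * ((Nat.factorial i : ℕ) : ℂ) := by
      rw [Nat.factorial_succ]; push_cast; ring
    have hcne : ((c : ℂ) + 1) ≠ 0 := by
      have : ((c + 1 : ℕ) : ℂ) ≠ 0 := by exact_mod_cast Nat.succ_ne_zero c
      push_cast at this; exact this
    have hn1ne : ((n : ℂ) + 1) ≠ 0 := by
      have : ((n + 1 : ℕ) : ℂ) ≠ 0 := by exact_mod_cast Nat.succ_ne_zero n
      push_cast at this; exact this
    have hine : ((i : ℂ) + 1) ≠ 0 := by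
      have : ((i + 1 : ℕ) : ℂ) ≠ 0 := by exact_mod_cast Nat.succ_ne_zero i
      push_cast at this; exact this
    have hkey : ((i + 1 : ℕ) : ℂ) * ((Nat.factorial n : ℕ) : ℂ)
        = ((n.choose i : ℕ) : ℂ) * ((Nat.factorial (n - i) : ℕ) : ℂ)
          * ((Nat.factorial (i + 1) : ℕ) : ℂ) := by
      rw [hfa]; linear_combination (-((i + 1 : ℕ) : ℂ)) * hchoose
    have hNne : ((n + 1 : ℕ) : ℂ) ≠ 0 := by exact_mod_cast Nat.succ_ne_zero n
    have hC1ne : ((c + 1 : ℕ) : ℂ) ≠ 0 := by exact_mod_cast Nat.succ_ne_zero c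
    have hCfne : ((Nat.factorial c : ℕ) : ℂ) ≠ 0 := hfacne c
    have hDne : ((Nat.factorial (i + 1) : ℕ) : ℂ) ≠ 0 := hfacne _
    rw [hfs, hfc, pow_succ, Nat.cast_mul]
    exact scalar_helper (c := c) _ _ _ _ _ _ _ _ _ _ _ hNne hC1ne hCfne hAne hDne hkey


lemma completeBell_eq_bellRec (n : ℕ) (x : ℕ → ℂ) : completeBell n x = bellRec n x := by
  induction n using Nat.strong_induction_on generalizing x with
  | _ n ih =>
    match n with
    | 0 => rw [completeBell, if_pos rfl]; simp [bellRec]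
    | (m + 1) =>
      rw [completeBell_eq, bE_rec, bellRec_succ, ← Finset.sum_range_reflect]
      apply Finset.sum_congr rfl
      intro j hj
      have hjm : j ≤ m := Nat.lt_succ_iff.mp (Finset.mem_range.mp hj)
      have h1 : m + 1 - 1 - j = m - j := by omega
      have h2 : m - (m - j) = j := by omega
      have h3 : (m.choose (m - j) : ℂ) = (m.choose j : ℂ) := by
        rw [Nat.choose_symm hjm]
      rw [h1, h2, h3, ← completeBell_eq, ih j (by omega)]
      ring

/-- With `φ = 2 Re H + G`, `f, H` holomorphic and `φ` smooth:
`∂^k(f e^{−H}) = ∑_{j=0}^k (−1)^j C(k,j) (∂̄*_φ)^{(j)} f · B_{k−j}^{G} · e^{−H}`,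
where `B_m^G` is the complete Bell polynomial evaluated at `(∂G, …, ∂^m G)`. -/
theorem wirtingerIter_f_exp_neg_H
    (f H : ℂ → ℂ) (hf : Differentiable ℂ f) (hH : Differentiable ℂ H)
    (φ : ℂ → ℝ) (hφ : ContDiff ℝ (⊤ : ℕ∞) φ)
    (G : ℂ → ℝ) (hG : ∀ z : ℂ, G z = φ z - 2 * (H z).re)
    (k : ℕ) (z : ℂ) :
    wirtingerIter k (fun w => f w * Complex.exp (-H w)) z =
      ∑ j ∈ Finset.range (k + 1),
        (-1 : ℂ) ^ j * (k.choose j : ℂ) * dbarStarIter φ j f z *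
          completeBell (k - j) (fun m => wirtingerIter m (fun w => (G w : ℂ)) z) *
          Complex.exp (-H z) := by
  -- notation
  set u : ℂ → ℂ := fun w => f w * (Real.exp (-φ w) : ℂ) with hu_def
  set EG : ℂ → ℂ := fun w => ((Real.exp (G w) : ℝ) : ℂ) with hEG_def
  set Q : ℂ → ℂ := fun w => (starRingEnd ℂ) (Complex.exp (H w)) with hQ_def
  -- smoothness
  have hφ' : ContDiff ℝ (⊤ : ℕ∞) φ := hφ.of_le (by simp)
  have hfC : ContDiff ℝ (⊤ : ℕ∞) f := (hf.contDiff).restrict_scalars ℝ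
  have hHC : ContDiff ℝ (⊤ : ℕ∞) H := (hH.contDiff).restrict_scalars ℝ
  have hGr : ContDiff ℝ (⊤ : ℕ∞) G := by
    have : G = fun z => φ z - 2 * (H z).re := funext hG
    rw [this]
    exact hφ'.sub (contDiff_const.mul (Complex.reCLM.contDiff.comp hHC))
  have huC : ContDiff ℝ (⊤ : ℕ∞) u := hfC.mul (exp_real_contDiff hφ'.neg)
  have hEGC : ContDiff ℝ (⊤ : ℕ∞) EG := exp_real_contDiff hGr
  have hexpH : Differentiable ℂ (fun w => Complex.exp (H w)) := hH.cexp
  have hQdiff : ∀ w, DifferentiableAt ℝ Q w := by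
    intro w
    exact (Complex.conjCLE.toContinuousLinearMap.differentiable.differentiableAt).comp w
      ((hexpH w).restrictScalars ℝ)
  have hQ0 : ∀ w, wirtinger Q w = 0 := fun w => wirtinger_conj_holo (hexpH w)
  -- pointwise factorization
  have key : ∀ w, (Real.exp (-φ w) : ℂ) * (Real.exp (G w) : ℂ) * Q w
      = Complex.exp (-H w) := by
    intro w
    rw [hQ_def]
    show (Real.exp (-φ w) : ℂ) * (Real.exp (G w) : ℂ) * (starRingEnd ℂ) (Complex.exp (H w))
      = Complex.exp (-H w)
    rw [← Complex.exp_conj, Complex.ofReal_exp, Complex.ofReal_exp, ← Complex.exp_add,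
      ← Complex.exp_add]
    congr 1
    have hc := Complex.add_conj (H w)
    rw [hG w]
    push_cast at hc ⊢
    linear_combination hc
  have hfact : (fun w => f w * Complex.exp (-H w)) = fun w => (u w * EG w) * Q w := by
    funext w
    rw [hu_def]
    show f w * Complex.exp (-H w) = f w * (Real.exp (-φ w) : ℂ) * EG w * Q w
    rw [mul_assoc, mul_assoc, ← mul_assoc ((Real.exp (-φ w) : ℝ) : ℂ), key w]
  rw [hfact]
  -- peel off the antiholomorphic factor
  rw [wirtingerIter_mul_antiholo (huC.mul hEGC) hQdiff hQ0 k]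
  rw [wirtingerIter_mul huC hEGC k]
  simp only [Finset.sum_mul]
  apply Finset.sum_congr rfl
  intro j hj
  -- Faà di Bruno factor
  have hfaa := congrFun (wirtingerIter_exp_real hGr (k - j)) z
  rw [hfaa]
  -- dbar* factor
  have hdb : dbarStarIter φ j f z
      = (-1 : ℂ) ^ j * (Real.exp (φ z) : ℂ) * wirtingerIter j u z := rfl
  rw [completeBell_eq_bellRec, hdb]
  have hsq : (-1 : ℂ) ^ j * (-1 : ℂ) ^ j = 1 := by
    rw [← pow_add, ← two_mul, pow_mul]
    norm_num
  have hQz := key z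
  have hee : ((Real.exp (-φ z) : ℝ) : ℂ) * ((Real.exp (φ z) : ℝ) : ℂ) = 1 := by
    rw [← Complex.ofReal_mul, ← Real.exp_add]
    simp
  -- final algebra
  calc (k.choose j : ℂ) * wirtingerIter j u z *
        ((Real.exp (G z) : ℂ) * bellRec (k - j)
          (fun m => wirtingerIter m (fun w => ((G w : ℝ) : ℂ)) z)) * Q z
      = (k.choose j : ℂ) * wirtingerIter j u z *
          bellRec (k - j) (fun m => wirtingerIter m (fun w => ((G w : ℝ) : ℂ)) z) *
          (((Real.exp (-φ z) : ℝ) : ℂ) * ((Real.exp (φ z) : ℝ) : ℂ) *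
            ((Real.exp (G z) : ℂ) * Q z)) := by rw [hee]; ring
    _ = (k.choose j : ℂ) * wirtingerIter j u z *
          bellRec (k - j) (fun m => wirtingerIter m (fun w => ((G w : ℝ) : ℂ)) z) *
          (((Real.exp (φ z) : ℝ) : ℂ) * Complex.exp (-H z)) := by
            rw [← hQz]; ring
    _ = (-1 : ℂ) ^ j * (k.choose j : ℂ) *
          ((-1 : ℂ) ^ j * (Real.exp (φ z) : ℂ) * wirtingerIter j u z) *
          bellRec (k - j) (fun m => wirtingerIter m (fun w => ((G w : ℝ) : ℂ)) z) *
          Complex.exp (-H z) := by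
            rw [show ((-1 : ℂ) ^ j * (k.choose j : ℂ) *
              ((-1 : ℂ) ^ j * (Real.exp (φ z) : ℂ) * wirtingerIter j u z))
              = ((-1 : ℂ) ^ j * (-1 : ℂ) ^ j) * ((k.choose j : ℂ) *
                (Real.exp (φ z) : ℂ) * wirtingerIter j u z) from by ring, hsq]
            ring
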